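/- arXiv:2012.06098 — 6 statements merged into one kernel-verified Lean document; each statement's English description precedes it below -/
import Mathlib

section
/- Let D be a k-linear triangulated category with a co-t-structure (D_{\ge 0}, D_{\le 0}) such that D is Karoubian (idempotent-complete) and for all X in D_{\ge 0} and Y in D_{\le 0} the vector space Hom(X, Y) is finite-dimensional over the field k. Then the coheart C = D_{\ge 0} \cap D_{\le 0} is a Krull--Schmidt category (every object decomposes as a finite direct sum of objects with local endomorphism rings). -/
/-!
The endomorphism algebra of an object of the coheart is finite-dimensional. A finite-dimensional
algebra whose only idempotents are `0` and `1` is local: each element lies in the commutative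
artinian subalgebra it generates, which has no nontrivial idempotents either and hence only one
maximal ideal. So if `End X` is not local it has a nontrivial idempotent, which splits because
the category is Karoubian; this writes `X ≅ Y ⊞ Z` with `Y`, `Z` nonzero and again in the coheart,
and `End Y`, `End Z` have smaller dimension than `End X`. Induction on `dim End X` concludes.
-/

open CategoryTheory Limits Pretriangulated

/-- A co-`t`-structure on a triangulated category: a pair of full additive subcategories
(given by iso-closed predicates) closed under direct summands, with the shift, orthogonality
and decomposition-triangle axioms. -/
structure CoTStructure (C : Type*) [Category C] [Preadditive C] [HasZeroObject C]
    [HasShift C ℤ] [∀ n : ℤ, (shiftFunctor C n).Additive] [Pretriangulated C] where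
  ge : C → Prop
  le : C → Prop
  ge_iso : ∀ {X Y : C}, (X ≅ Y) → ge X → ge Y
  le_iso : ∀ {X Y : C}, (X ≅ Y) → le X → le Y
  ge_summand : ∀ X Y : C, ge (X ⊞ Y) → ge X
  le_summand : ∀ X Y : C, le (X ⊞ Y) → le X
  ge_shift : ∀ X : C, ge X → ge (X⟦(-1 : ℤ)⟧)
  le_shift : ∀ X : C, le X → le (X⟦(1 : ℤ)⟧)
  hom_zero : ∀ A B : C, ge A → le B → ∀ f : A ⟶ B⟦(1 : ℤ)⟧, f = 0
  exists_triangle : ∀ X : C, ∃ (A B : C) (f : A ⟶ X) (g : X ⟶ B) (h : B ⟶ A⟦(1 : ℤ)⟧),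
    (Triangle.mk f g h ∈ distTriang C) ∧ ge A ∧ le (B⟦(-1 : ℤ)⟧)

open Module

theorem IsArtinianRing.isLocalRing_of_isIdempotentElem {R : Type*} [CommRing R]
    [IsArtinianRing R] [Nontrivial R] (h : ∀ e : R, IsIdempotentElem e → e = 0 ∨ e = 1) :
    IsLocalRing R := by
  by_contra hR
  obtain ⟨m₁, m₂, hm₁, hm₂, hne⟩ := (IsLocalRing.not_isLocalRing_tfae.out 0 2).mp hR
  obtain ⟨e, he₁, he, he₂⟩ := IsArtinianRing.exists_not_mem_forall_mem_of_ne m₁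
  rcases h e he with rfl | rfl
  · exact he₁ m₁.zero_mem
  · exact hm₂.ne_top ((Ideal.eq_top_iff_one _).mpr (he₂ m₂ hm₂.isPrime hne.symm))

open scoped IsMulCommutative in
theorem isLocalRing_of_isIdempotentElem_of_finiteDimensional {k A : Type*} [Field k] [Ring A]
    [Nontrivial A] [Algebra k A] [FiniteDimensional k A]
    (h : ∀ e : A, IsIdempotentElem e → e = 0 ∨ e = 1) : IsLocalRing A := by
  refine IsLocalRing.of_isUnit_or_isUnit_one_sub_self fun a => ?_
  let S := Algebra.adjoin k {a}
  have : IsArtinianRing S := IsArtinianRing.of_finite k S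
  have : IsLocalRing S := IsArtinianRing.isLocalRing_of_isIdempotentElem fun e he =>
    (h e (congrArg Subtype.val he)).imp Subtype.ext Subtype.ext
  exact (IsLocalRing.isUnit_or_isUnit_one_sub_self
    (⟨a, Algebra.self_mem_adjoin_singleton k a⟩ : S)).imp (·.map S.val) (·.map S.val)

namespace CategoryTheory

variable {C : Type*} [Category C] [Preadditive C]

theorem exists_iso_biprod_of_idempotent [IsIdempotentComplete C] [HasBinaryBiproducts C]
    {X : C} {p : X ⟶ X} (hp : p ≫ p = p) (h₀ : p ≠ 0) (h₁ : p ≠ 𝟙 X) :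
    ∃ (Y Z : C) (_ : X ≅ Y ⊞ Z), ¬IsZero Y ∧ ¬IsZero Z := by
  have hq : (𝟙 X - p) ≫ (𝟙 X - p) = 𝟙 X - p := by simp [hp]
  obtain ⟨Y, i, r, hir, hri⟩ := IsIdempotentComplete.idempotents_split X p hp
  obtain ⟨Z, j, s, hjs, hsj⟩ := IsIdempotentComplete.idempotents_split X _ hq
  have his : i ≫ s = 0 := calc
    i ≫ s = (i ≫ r) ≫ i ≫ s ≫ (j ≫ s) := by simp [hir, hjs]
    _ = i ≫ ((r ≫ i) ≫ (s ≫ j)) ≫ s := by simp only [Category.assoc]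
    _ = 0 := by simp [hri, hsj, hp]
  have hjr : j ≫ r = 0 := calc
    j ≫ r = (j ≫ s) ≫ j ≫ r ≫ (i ≫ r) := by simp [hir, hjs]
    _ = j ≫ ((s ≫ j) ≫ (r ≫ i)) ≫ r := by simp only [Category.assoc]
    _ = 0 := by simp [hri, hsj, hp]
  let b : BinaryBicone Y Z :=
    { pt := X, fst := r, snd := s, inl := i, inr := j
      inl_fst := hir, inl_snd := his, inr_fst := hjr, inr_snd := hjs }
  have total : b.fst ≫ b.inl + b.snd ≫ b.inr = 𝟙 X := by simp [b, hri, hsj]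
  refine ⟨Y, Z, biprod.uniqueUpToIso Y Z (isBinaryBilimitOfTotal b total), fun hY => h₀ ?_,
    fun hZ => h₁ ?_⟩
  · rw [← hri, hY.eq_of_tgt r 0, zero_comp]
  · rw [eq_comm, ← sub_eq_zero, ← hsj, hZ.eq_of_tgt s 0, zero_comp]

section Linear

variable (k : Type*) [Field k] [Linear k C] [HasBinaryBiproducts C]

theorem finrank_end_lt_finrank_end_biprod {Y Z : C} [FiniteDimensional k (Y ⊞ Z ⟶ Y ⊞ Z)]
    (hZ : ¬IsZero Z) : finrank k (Y ⟶ Y) < finrank k (Y ⊞ Z ⟶ Y ⊞ Z) := by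
  let φ : (Y ⟶ Y) →ₗ[k] (Y ⊞ Z ⟶ Y ⊞ Z) :=
    (Linear.leftComp k _ biprod.fst).comp (Linear.rightComp k _ biprod.inl)
  have hφ : Function.Injective φ := fun f g h => by
    simpa [φ] using congrArg (biprod.inl ≫ · ≫ biprod.fst) h
  have hrange : LinearMap.range φ ≠ ⊤ := fun h => hZ <| by
    obtain ⟨f, hf⟩ := LinearMap.range_eq_top.mp h (𝟙 _)
    rw [IsZero.iff_id_eq_zero]
    simpa [φ] using congrArg (biprod.inr ≫ · ≫ biprod.snd) hf.symm
  calc finrank k (Y ⟶ Y) = finrank k (LinearMap.range φ) :=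
        (LinearMap.finrank_range_of_inj hφ).symm
    _ < finrank k (Y ⊞ Z ⟶ Y ⊞ Z) := Submodule.finrank_lt hrange

theorem finrank_end_lt_of_iso_biprod {X Y Z : C} [FiniteDimensional k (X ⟶ X)] (φ : X ≅ Y ⊞ Z)
    (hZ : ¬IsZero Z) : finrank k (Y ⟶ Y) < finrank k (X ⟶ X) := by
  let e := Linear.homCongr k φ φ
  have := e.finiteDimensional
  rw [e.finrank_eq]
  exact finrank_end_lt_finrank_end_biprod k hZ

theorem exists_iso_biprod_of_not_isLocalRing [IsIdempotentComplete C] {X : C}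
    [FiniteDimensional k (X ⟶ X)] (hX : ¬IsZero X) (h : ¬IsLocalRing (End X)) :
    ∃ (Y Z : C) (_ : X ≅ Y ⊞ Z), ¬IsZero Y ∧ ¬IsZero Z := by
  have : FiniteDimensional k (End X) := ‹FiniteDimensional k (X ⟶ X)›
  have : Nontrivial (End X) := ⟨𝟙 X, 0, by rwa [Ne, ← IsZero.iff_id_eq_zero]⟩
  have : ¬∀ e : End X, IsIdempotentElem e → e = 0 ∨ e = 1 := fun h' =>
    h (isLocalRing_of_isIdempotentElem_of_finiteDimensional (k := k) h')
  push Not at this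
  obtain ⟨e, he, h₀, h₁⟩ := this
  exact exists_iso_biprod_of_idempotent he.eq h₀ h₁

end Linear

section FiniteBiproducts

variable [HasFiniteBiproducts C]

noncomputable def biproductFinAppendIso [HasBinaryBiproducts C] {m n : ℕ} (f : Fin m → C)
    (g : Fin n → C) : ⨁ Fin.append f g ≅ (⨁ f) ⊞ (⨁ g) :=
  (biproduct.whiskerEquiv (f := Sum.elim f g) (g := Fin.append f g) finSumFinEquiv
      fun j => eqToIso (by cases j <;> simp)).symm ≪≫
    (biproduct.isLimit _).conePointUniqueUpToIso
      (Fan.combPairIsLimit (biproduct.isLimit f) (biproduct.isLimit g)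
        (BinaryBiproduct.isLimit _ _))

def IsFiniteBiproductOf (Q : C → Prop) (X : C) : Prop :=
  ∃ (n : ℕ) (f : Fin n → C), (∀ i, Q (f i)) ∧ Nonempty (X ≅ ⨁ f)

namespace IsFiniteBiproductOf

variable {Q : C → Prop}

theorem of_isZero {X : C} (hX : IsZero X) : IsFiniteBiproductOf Q X :=
  ⟨0, Fin.elim0, fun i => i.elim0,
    ⟨hX.iso ((IsZero.iff_id_eq_zero _).mpr (biproduct.hom_ext _ _ fun i => i.elim0))⟩⟩

theorem of_prop {X : C} (hX : Q X) : IsFiniteBiproductOf Q X :=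
  ⟨1, fun _ => X, fun _ => hX, ⟨(biproductUniqueIso fun _ : Fin 1 => X).symm⟩⟩

theorem of_iso {X Y : C} (e : X ≅ Y) : IsFiniteBiproductOf Q Y → IsFiniteBiproductOf Q X
  | ⟨n, f, hf, ⟨e'⟩⟩ => ⟨n, f, hf, ⟨e ≪≫ e'⟩⟩

theorem biprod [HasBinaryBiproducts C] {Y Z : C} :
    IsFiniteBiproductOf Q Y → IsFiniteBiproductOf Q Z → IsFiniteBiproductOf Q (Y ⊞ Z)
  | ⟨m, f, hf, ⟨eY⟩⟩, ⟨n, g, hg, ⟨eZ⟩⟩ =>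
    ⟨m + n, Fin.append f g, Fin.addCases (by simpa using hf) (by simpa using hg),
      ⟨biprod.mapIso eY eZ ≪≫ (biproductFinAppendIso f g).symm⟩⟩

end IsFiniteBiproductOf

theorem isFiniteBiproductOf_isLocalRing_end (k : Type*) [Field k] [Linear k C]
    [HasBinaryBiproducts C] [IsIdempotentComplete C] (P : C → Prop)
    (hiso : ∀ {X Y : C}, (X ≅ Y) → P X → P Y) (hsummand : ∀ X Y : C, P (X ⊞ Y) → P X)
    (hfin : ∀ X, P X → FiniteDimensional k (X ⟶ X)) {X : C} (hX : P X) :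
    IsFiniteBiproductOf (fun Y => P Y ∧ IsLocalRing (End Y)) X := by
  induction h : finrank k (X ⟶ X) using Nat.strong_induction_on generalizing X with
  | _ N ih =>
  have := hfin X hX
  by_cases hzero : IsZero X
  · exact .of_isZero hzero
  by_cases hloc : IsLocalRing (End X)
  · exact .of_prop ⟨hX, hloc⟩
  obtain ⟨Y, Z, φ, hY, hZ⟩ := exists_iso_biprod_of_not_isLocalRing k hzero hloc
  have hYZ : P (Y ⊞ Z) := hiso φ hX
  have hPY : P Y := hsummand Y Z hYZ
  have hPZ : P Z := hsummand Z Y (hiso (biprod.braiding Y Z) hYZ)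
  refine .of_iso φ (.biprod (ih _ ?_ hPY rfl) (ih _ ?_ hPZ rfl))
  · exact h ▸ finrank_end_lt_of_iso_biprod k φ hZ
  · exact h ▸ finrank_end_lt_of_iso_biprod k (φ ≪≫ biprod.braiding Y Z) hY

end FiniteBiproducts

end CategoryTheory

namespace CoTStructure

variable {C : Type*} [Category C] [Preadditive C] [HasZeroObject C] [HasShift C ℤ]
  [∀ n : ℤ, (shiftFunctor C n).Additive] [Pretriangulated C] (t : CoTStructure C)

def coheart (X : C) : Prop := t.ge X ∧ t.le X

theorem coheart_of_iso {X Y : C} (e : X ≅ Y) (h : t.coheart X) : t.coheart Y :=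
  ⟨t.ge_iso e h.1, t.le_iso e h.2⟩

theorem coheart_of_coheart_biprod {X Y : C} (h : t.coheart (X ⊞ Y)) : t.coheart X :=
  ⟨t.ge_summand X Y h.1, t.le_summand X Y h.2⟩

end CoTStructure

/-- Lemma 2.7 (Krull--Schmidt coheart): if `D` is a `k`-linear triangulated category with
a co-`t`-structure, `D` is Karoubian, and all Hom-spaces from `D_{≥0}` to `D_{≤0}` are
finite-dimensional over `k`, then the coheart `D_{≥0} ∩ D_{≤0}` is Krull--Schmidt:
every object in it is a finite direct sum of objects of the coheart with local
endomorphism rings. -/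
theorem coheart_krullSchmidt
    {k : Type*} [Field k] {C : Type*} [Category C] [Preadditive C] [Linear k C]
    [HasZeroObject C] [HasShift C ℤ] [∀ n : ℤ, (shiftFunctor C n).Additive]
    [Pretriangulated C] [IsIdempotentComplete C]
    (t : CoTStructure C)
    (hfin : ∀ X Y : C, t.ge X → t.le Y → FiniteDimensional k (X ⟶ Y)) :
    ∀ X : C, t.ge X → t.le X →
      ∃ (n : ℕ) (f : Fin n → C),
        (∀ i, t.ge (f i) ∧ t.le (f i) ∧ IsLocalRing (End (f i))) ∧
        Nonempty (X ≅ ⨁ f) := by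
  intro X hge hle
  obtain ⟨n, f, hf, hX⟩ := isFiniteBiproductOf_isLocalRing_end k t.coheart t.coheart_of_iso
    (fun _ _ => t.coheart_of_coheart_biprod) (fun X hX => hfin X X hX.1 hX.2) ⟨hge, hle⟩
  exact ⟨n, f, fun i => and_assoc.mp (hf i), hX⟩
end

section
/- Let R = \bigoplus_{n \in \mathbb{Z}} R_n be a Z-graded finite-dimensional algebra over a field k. If the degree-zero component R_0 is a local ring, then R is a local ring. -/
/-!
Let `I ⊆ R` be the set of elements whose degree-zero component is a nonunit of `R₀`, i.e.
`I = 𝔪 ⊕ ⨁_{n ≠ 0} Rₙ`. Since only finitely many `Rₙ` are nonzero, homogeneous elements of nonzero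
degree are nilpotent, hence never left factors of a unit; so `I` is stable under left
multiplication by homogeneous elements.

`I` is nil. In a product of homogeneous elements of `I`, the partial sums of the degrees range over
the finitely many `n` with `Rₙ ≠ 0`, so in a long product some value is taken `t + 1` times. The
`t` blocks between consecutive occurrences have degree zero and lie in `I`, hence in the Jacobson
radical `𝔪` of the Artinian ring `R₀`, and `𝔪 ^ t = 0` for suitable `t`.

Finally, if `a₀` is a unit then `a = a₀ (1 + a₀⁻¹ (a - a₀))` with `a₀⁻¹ (a - a₀) ∈ I` nilpotent,
so `a` is a unit; and `a + b = 1` forces `a₀` or `b₀` to be a unit of the local ring `R₀`.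
-/

open DirectSum

theorem IsLocalRing.mem_ringJacobson_of_mem_nonunits {A : Type*} [Ring A] [IsLocalRing A]
    [IsDedekindFiniteMonoid A] {x : A} (hx : x ∈ nonunits A) : x ∈ Ring.jacobson A := by
  rw [← Ideal.jacobson_bot, Ideal.mem_jacobson_iff]
  intro y
  have hyx : y * x ∈ nonunits A := fun h => hx (isUnit_of_mul_isUnit_right h)
  obtain ⟨u, hu⟩ : IsUnit (y * x + 1) := by
    refine (IsLocalRing.isUnit_or_isUnit_of_add_one (b := -(y * x)) (by abel)).resolve_right ?_
    rwa [IsUnit.neg_iff]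
  refine ⟨↑u⁻¹, ?_⟩
  rw [Ideal.mem_bot, mul_assoc, sub_eq_zero, ← mul_add_one (↑u⁻¹ : A), ← hu, Units.inv_mul]

namespace GradedRing

variable {k R : Type*} [Field k] [Ring R] [Algebra k R] (ℛ : ℤ → Submodule k R) [GradedRing ℛ]

def degreeZeroNonunits : Set R := {a | decompose ℛ a 0 ∈ nonunits (ℛ 0)}

variable {ℛ} in
theorem isUnit_coe_of_isUnit {z : ℛ 0} (hz : IsUnit z) : IsUnit (z : R) :=
  hz.map (SetLike.GradeZero.subring ℛ).subtype

theorem mem_span_homogeneous [Nontrivial (ℛ 0)] {a : R} (ha : a ∈ degreeZeroNonunits ℛ) :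
    a ∈ Submodule.span k (degreeZeroNonunits ℛ ∩ {x | SetLike.IsHomogeneousElem ℛ x}) := by
  classical
  rw [← sum_support_decompose ℛ a]
  refine Submodule.sum_mem _ fun i _ => Submodule.subset_span ⟨?_, i, (decompose ℛ a i).2⟩
  rw [degreeZeroNonunits, Set.mem_ofPred_eq, decompose_coe]
  rcases eq_or_ne i 0 with rfl | hi
  · rwa [of_eq_same]
  · rw [of_eq_of_ne _ _ _ hi.symm]
    exact zero_mem_nonunits.mpr zero_ne_one

section FiniteDimensional

variable [FiniteDimensional k R]

instance instIsArtinianRingGradeZero : IsArtinianRing (ℛ 0) :=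
  have : IsScalarTower k (ℛ 0) (ℛ 0) := ⟨fun c a b => Subtype.ext (smul_mul_assoc c (a : R) b)⟩
  IsArtinianRing.of_finite k (ℛ 0)

theorem finite_setOf_ne_bot : {n : ℤ | ℛ n ≠ ⊥}.Finite :=
  Submodule.finite_ne_bot_of_iSupIndep (Decomposition.isInternal ℛ).submodule_iSupIndep

theorem isNilpotent_of_mem_of_ne_zero {n : ℤ} (hn : n ≠ 0) {x : R} (hx : x ∈ ℛ n) :
    IsNilpotent x := by
  have hinj : Function.Injective fun N : ℕ => (N : ℤ) * n := fun a b h => by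
    simpa [hn] using h
  obtain ⟨N, -, hN⟩ := Set.infinite_univ.exists_notMem_finite
    ((finite_setOf_ne_bot ℛ).preimage hinj.injOn)
  refine ⟨N, (Submodule.mem_bot k).mp ?_⟩
  simpa [not_not.mp hN] using SetLike.pow_mem_graded N hx

theorem mk_mem_ringJacobson [IsLocalRing (ℛ 0)] {x : R} (h0 : x ∈ ℛ 0)
    (hx : x ∈ degreeZeroNonunits ℛ) : (⟨x, h0⟩ : ℛ 0) ∈ Ring.jacobson (ℛ 0) := by
  refine IsLocalRing.mem_ringJacobson_of_mem_nonunits ?_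
  rwa [degreeZeroNonunits, Set.mem_ofPred_eq, decompose_of_mem ℛ h0, of_eq_same] at hx

variable [Nontrivial R]

theorem mul_mem_degreeZeroNonunits {p : ℤ} {x y : R} (hx : x ∈ ℛ p)
    (hy : y ∈ degreeZeroNonunits ℛ) : x * y ∈ degreeZeroNonunits ℛ := by
  have hcoe := coe_decompose_mul_add_of_left_mem ℛ (j := -p) (b := y) hx
  rw [add_neg_cancel] at hcoe
  intro h
  rcases eq_or_ne p 0 with rfl | hp
  · rw [show decompose ℛ (x * y) 0 = ⟨x, hx⟩ * decompose ℛ y 0 from Subtype.ext hcoe] at h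
    exact hy (isUnit_of_mul_isUnit_right h)
  · have := IsArtinianRing.of_finite k R
    refine (isNilpotent_of_mem_of_ne_zero ℛ hp hx).not_isUnit ?_
    exact isUnit_of_mul_isUnit_left (hcoe ▸ isUnit_coe_of_isUnit h)

/- Products of homogeneous elements are encoded as lists of pairs `(n, x)` with `x ∈ ℛ n`:
the degree has to be recorded, since it is not determined by `x = 0`. -/

theorem list_prod_mem_degreeZeroNonunits {l : List (ℤ × R)}
    (hl : ∀ p ∈ l, p.2 ∈ ℛ p.1 ∧ p.2 ∈ degreeZeroNonunits ℛ) (hne : l ≠ []) :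
    (l.map Prod.snd).prod ∈ degreeZeroNonunits ℛ := by
  induction l with
  | nil => exact absurd rfl hne
  | cons p l ih =>
    have hp := hl p List.mem_cons_self
    rcases eq_or_ne l [] with rfl | hl'
    · simpa using hp.2
    rw [List.map_cons, List.prod_cons]
    exact mul_mem_degreeZeroNonunits ℛ hp.1 (ih (fun q hq => hl q (List.mem_cons_of_mem p hq)) hl')

variable [IsLocalRing (ℛ 0)]

theorem exists_mem_ringJacobson_drop_prod_eq {l : List (ℤ × R)}
    (hl : ∀ p ∈ l, p.2 ∈ ℛ p.1 ∧ p.2 ∈ degreeZeroNonunits ℛ) {i j : ℕ} (hji : j < i)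
    (hi : i ≤ l.length) (hsum : ((l.take j).map Prod.fst).sum = ((l.take i).map Prod.fst).sum) :
    ∃ z ∈ Ring.jacobson (ℛ 0),
      ((l.drop j).map Prod.snd).prod = z * ((l.drop i).map Prod.snd).prod := by
  set seg := (l.drop j).take (i - j)
  have hdrop : l.drop j = seg ++ l.drop i := by
    rw [← List.take_append_drop (i - j) (l.drop j), List.drop_drop, Nat.add_sub_cancel' hji.le]
  have htake : l.take i = l.take j ++ seg := by
    rw [← List.take_add, Nat.add_sub_cancel' hji.le]
  have hseg_ne : seg ≠ [] := by
    rw [← List.length_pos_iff, List.length_take, List.length_drop]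
    omega
  have hseg_sum : (seg.map Prod.fst).sum = 0 := by
    rw [htake, List.map_append, List.sum_append] at hsum
    linarith
  have hseg_hl : ∀ p ∈ seg, p.2 ∈ ℛ p.1 ∧ p.2 ∈ degreeZeroNonunits ℛ := fun p hp =>
    hl p (List.mem_of_mem_drop (List.mem_of_mem_take hp))
  have hseg_mem : (seg.map Prod.snd).prod ∈ ℛ 0 :=
    hseg_sum ▸ SetLike.list_prod_map_mem_graded _ _ _ fun p hp => (hseg_hl p hp).1
  refine ⟨⟨_, hseg_mem⟩, mk_mem_ringJacobson ℛ hseg_mem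
    (list_prod_mem_degreeZeroNonunits ℛ hseg_hl hseg_ne), ?_⟩
  rw [hdrop, List.map_append, List.prod_append]

theorem exists_prod_eq_mul_mul_of_prefix_sum_eq {l : List (ℤ × R)}
    (hl : ∀ p ∈ l, p.2 ∈ ℛ p.1 ∧ p.2 ∈ degreeZeroNonunits ℛ) (y : ℤ) (F : Finset ℕ)
    (hF : ∀ j ∈ F, j ≤ l.length ∧ ((l.take j).map Prod.fst).sum = y) (hne : F.Nonempty) :
    ∃ j ∈ F, ∃ (a : R) (z : ℛ 0), z ∈ Ring.jacobson (ℛ 0) ^ (F.card - 1) ∧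
      (l.map Prod.snd).prod = a * z * ((l.drop j).map Prod.snd).prod := by
  classical
  induction F using Finset.induction_on_max with
  | empty => exact absurd hne Finset.not_nonempty_empty
  | insert i s hlt ih =>
    obtain ⟨hi, hisum⟩ := hF i (Finset.mem_insert_self i s)
    rw [Finset.card_insert_of_notMem fun h => lt_irrefl i (hlt i h), Nat.add_sub_cancel]
    rcases s.eq_empty_or_nonempty with rfl | hs
    · refine ⟨i, Finset.mem_insert_self i ∅, ((l.take i).map Prod.snd).prod, 1, ?_, ?_⟩
      · rw [Finset.card_empty, Submodule.pow_zero, Ideal.one_eq_top]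
        exact Submodule.mem_top
      · change _ = _ * 1 * _
        rw [mul_one, ← List.prod_append, ← List.map_append, List.take_append_drop]
    obtain ⟨j, hj, a, z, hz, hprod⟩ := ih (fun j hj => hF j (Finset.mem_insert_of_mem hj)) hs
    obtain ⟨w, hw, hwprod⟩ := exists_mem_ringJacobson_drop_prod_eq ℛ hl (hlt j hj) hi
      ((hF j (Finset.mem_insert_of_mem hj)).2.trans hisum.symm)
    refine ⟨i, Finset.mem_insert_self i s, a, z * w, ?_, ?_⟩
    · rw [← Nat.sub_one_add_one hs.card_pos.ne', Submodule.pow_succ]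
      exact Ideal.mul_mem_mul hz hw
    · change _ = a * (z * w) * _
      rw [hprod, hwprod]
      simp only [mul_assoc]

theorem exists_list_prod_eq_zero :
    ∃ N : ℕ, ∀ l : List (ℤ × R), l.length = N →
      (∀ p ∈ l, p.2 ∈ ℛ p.1 ∧ p.2 ∈ degreeZeroNonunits ℛ) → (l.map Prod.snd).prod = 0 := by
  classical
  obtain ⟨t, ht⟩ := IsArtinianRing.isNilpotent_jacobson_bot (R := ℛ 0)
  rw [Ideal.jacobson_bot] at ht
  have hfin := finite_setOf_ne_bot ℛ
  refine ⟨hfin.toFinset.card * t, fun l hlen hl => ?_⟩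
  set S : ℕ → ℤ := fun j => ((l.take j).map Prod.fst).sum
  by_cases hbot : ∃ j, ℛ (S j) = ⊥
  · obtain ⟨j, hj⟩ := hbot
    have hpre : ((l.take j).map Prod.snd).prod ∈ ℛ (S j) :=
      SetLike.list_prod_map_mem_graded _ _ _ fun p hp => (hl p (List.mem_of_mem_take hp)).1
    rw [hj, Submodule.mem_bot] at hpre
    rw [← List.take_append_drop j l, List.map_append, List.prod_append, hpre, zero_mul]
  obtain ⟨y, -, hy⟩ := Finset.exists_lt_card_fiber_of_mul_lt_card_of_maps_to
    (s := Finset.range (l.length + 1)) (f := S) (n := t)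
    (fun j _ => hfin.mem_toFinset.mpr (not_exists.mp hbot j))
    (by rw [Finset.card_range, hlen]; omega)
  obtain ⟨_, -, a, z, hz, hprod⟩ := exists_prod_eq_mul_mul_of_prefix_sum_eq ℛ hl y
    {j ∈ Finset.range (l.length + 1) | S j = y}
    (fun j hj => by
      rw [Finset.mem_filter, Finset.mem_range] at hj
      exact ⟨Nat.lt_succ_iff.mp hj.1, hj.2⟩)
    (Finset.card_pos.mp (by omega))
  have hz0 : z = 0 := by
    have := Ideal.pow_le_pow_right (m := t) (by omega) hz
    rwa [ht, Submodule.zero_eq_bot, Submodule.mem_bot] at this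
  rw [hprod, hz0, ZeroMemClass.coe_zero, mul_zero, zero_mul]

theorem isNilpotent_of_mem_degreeZeroNonunits {a : R} (ha : a ∈ degreeZeroNonunits ℛ) :
    IsNilpotent a := by
  obtain ⟨N, hN⟩ := exists_list_prod_eq_zero ℛ
  have hbot : Submodule.span k (degreeZeroNonunits ℛ ∩ {x | SetLike.IsHomogeneousElem ℛ x}) ^ N
      = ⊥ := by
    rw [Submodule.span_pow, Submodule.span_eq_bot]
    intro x hx
    obtain ⟨f, rfl⟩ := Set.mem_pow.mp hx
    choose d hd using fun i => (f i).2.2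
    simpa [List.map_ofFn, Function.comp_def] using
      hN (List.ofFn fun i => (d i, (f i : R))) List.length_ofFn
        (by simpa [List.mem_ofFn] using fun i => ⟨hd i, (f i).2.1⟩)
  exact ⟨N, by simpa [hbot] using Submodule.pow_mem_pow _ (mem_span_homogeneous ℛ ha) N⟩

theorem isUnit_of_isUnit_decompose_zero {a : R} (ha : IsUnit (decompose ℛ a 0)) : IsUnit a := by
  obtain ⟨u, hu⟩ := ha
  set u₀ : R := ((u : ℛ 0) : R)
  set v : R := (((u⁻¹ : (ℛ 0)ˣ) : ℛ 0) : R)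
  have hrest : a - u₀ ∈ degreeZeroNonunits ℛ := by
    rw [degreeZeroNonunits, Set.mem_ofPred_eq, decompose_sub, DirectSum.sub_apply, decompose_coe,
      of_eq_same, hu, sub_self]
    exact zero_mem_nonunits.mpr zero_ne_one
  have hnil := isNilpotent_of_mem_degreeZeroNonunits ℛ
    (mul_mem_degreeZeroNonunits ℛ (u⁻¹ : (ℛ 0)ˣ).val.2 hrest)
  have hv : u₀ * v = 1 := congrArg Subtype.val u.mul_inv
  have ha : a = u₀ * (1 + v * (a - u₀)) := by
    rw [mul_add, mul_one, ← mul_assoc, hv, one_mul, add_sub_cancel]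
  rw [ha]
  exact (isUnit_coe_of_isUnit u.isUnit).mul hnil.isUnit_one_add

end FiniteDimensional

end GradedRing

/-- Gordon--Green: a `ℤ`-graded finite-dimensional algebra over a field whose degree-zero
component is a local ring is itself a local ring. -/
theorem isLocalRing_of_gradeZero_isLocalRing
    {k R : Type*} [Field k] [Ring R] [Algebra k R]
    (ℛ : ℤ → Submodule k R) [GradedRing ℛ] [FiniteDimensional k R]
    [IsLocalRing (ℛ 0)] :
    IsLocalRing R := by
  have : Nontrivial R := Function.Injective.nontrivial (f := ((↑) : ℛ 0 → R)) Subtype.val_injective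
  refine ⟨fun {a b} hab => ?_⟩
  have h₀ : decompose ℛ a 0 + decompose ℛ b 0 = 1 := by
    rw [← DirectSum.add_apply, ← decompose_add, hab]
    exact Subtype.ext (decompose_of_mem_same ℛ SetLike.GradedOne.one_mem)
  exact (IsLocalRing.isUnit_or_isUnit_of_add_one h₀).imp
    (GradedRing.isUnit_of_isUnit_decompose_zero ℛ) (GradedRing.isUnit_of_isUnit_decompose_zero ℛ)
end

section
/- Let D be a triangulated category with a bounded co-t-structure (D_{\ge 0}, D_{\le 0}) and coheart S = D_{\ge 0} \cap D_{\le 0}. Then S is a silting subcategory: S is closed under direct summands, Hom(S, S'[k]) = 0 for all S, S' in S and all k > 0, and S generates D as a triangulated category closed under direct summands. -/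
/-! Each half of a co-`t`-structure is the orthogonal of the other: `X` lies in `le` as soon as
every map from `ge` to `X⟦1⟧` vanishes, since the first map of the decomposition triangle of
`X⟦1⟧` is then zero and the triangle splits, exhibiting `X` as a summand of an object of `le`.
Hence both halves are closed under extensions. For generation, induct on the width `k` of an
object `Y` with `Y ∈ le` and `Y⟦-k⟧ ∈ ge`: in its decomposition triangle `A → Y → B`, the
object `A` lies in `ge`, and in `le` by extension closure, so it lies in the coheart, while
`B⟦-1⟧` has width `k - 1`. Boundedness gives every object, up to shift, a finite width. -/

open CategoryTheory Limits Pretriangulated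

section IsoClosed

variable {C : Type*} [Category C] [HasShift C ℤ] {P : C → Prop}

theorem shift_zero_iff_of_iso_closed (hP : ∀ {X Y : C}, (X ≅ Y) → P X → P Y) (X : C) :
    P (X⟦(0 : ℤ)⟧) ↔ P X :=
  ⟨hP ((shiftFunctorZero C ℤ).app X), hP ((shiftFunctorZero C ℤ).app X).symm⟩

theorem shift_shift_iff_of_iso_closed (hP : ∀ {X Y : C}, (X ≅ Y) → P X → P Y) (X : C)
    (a b : ℤ) : P (X⟦a⟧⟦b⟧) ↔ P (X⟦a + b⟧) :=
  ⟨hP ((shiftFunctorAdd C a b).app X).symm, hP ((shiftFunctorAdd C a b).app X)⟩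

end IsoClosed

section Preadditive

variable {C : Type*} [Category C] [Preadditive C] [HasShift C ℤ]
  [∀ n : ℤ, (shiftFunctor C n).Additive]

theorem shift_triangle_mor₁_eq_zero {T : Triangle C} (h : T.mor₁ = 0) (n : ℤ) :
    ((shiftFunctor (Triangle C) n).obj T).mor₁ = 0 := by
  rw [Triangle.shiftFunctor_eq, Triangle.shiftFunctor_obj, Triangle.mk_mor₁, h, Functor.map_zero,
    smul_zero]
  rfl

end Preadditive

section Pretriangulated

variable {C : Type*} [Category C] [Preadditive C] [HasZeroObject C] [HasShift C ℤ]
  [∀ n : ℤ, (shiftFunctor C n).Additive] [Pretriangulated C]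

theorem nonempty_iso_biprod_of_distTriang_of_mor₁_eq_zero {T : Triangle C} (hT : T ∈ distTriang C)
    (h : T.mor₁ = 0) : Nonempty (T.obj₃ ≅ T.obj₂ ⊞ (T.obj₁⟦(1 : ℤ)⟧)) := by
  obtain ⟨e, -⟩ := exists_iso_binaryBiproduct_of_distTriang _ (rot_of_distTriang _ hT)
    (by simp [h]; rfl)
  exact ⟨e⟩

theorem nonempty_iso_biprod_of_distTriang_of_mor₂_eq_zero {T : Triangle C} (hT : T ∈ distTriang C)
    (h : T.mor₂ = 0) : Nonempty (T.obj₁ ≅ (T.obj₃⟦(-1 : ℤ)⟧) ⊞ T.obj₂) := by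
  obtain ⟨e, -⟩ := exists_iso_binaryBiproduct_of_distTriang _ (inv_rot_of_distTriang _ hT)
    (by simp [h]; rfl)
  exact ⟨e⟩

end Pretriangulated

namespace CoTStructure

variable {C : Type*} [Category C] [Preadditive C] [HasZeroObject C] [HasShift C ℤ]
  [∀ n : ℤ, (shiftFunctor C n).Additive] [Pretriangulated C] (t : CoTStructure C)

theorem le_shift_of_le_shift {X : C} {a b : ℤ} (hab : a ≤ b) (h : t.le (X⟦a⟧)) :
    t.le (X⟦b⟧) := by
  induction b, hab using Int.leInduction with
  | base => exact h
  | succ n _ ih => exact (shift_shift_iff_of_iso_closed t.le_iso X n 1).1 (t.le_shift _ ih)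

theorem ge_shift_of_ge_shift {X : C} {a b : ℤ} (hab : a ≤ b) (h : t.ge (X⟦b⟧)) :
    t.ge (X⟦a⟧) := by
  induction a, hab using Int.leInductionDown with
  | base => exact h
  | pred n _ ih => exact (shift_shift_iff_of_iso_closed t.ge_iso X n (-1)).1 (t.ge_shift _ ih)

theorem le_shift_of_nonneg {X : C} {n : ℤ} (hn : 0 ≤ n) (h : t.le X) : t.le (X⟦n⟧) :=
  t.le_shift_of_le_shift hn ((shift_zero_iff_of_iso_closed t.le_iso X).2 h)

theorem ge_shift_of_nonpos {X : C} {n : ℤ} (hn : n ≤ 0) (h : t.ge X) : t.ge (X⟦n⟧) :=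
  t.ge_shift_of_ge_shift hn ((shift_zero_iff_of_iso_closed t.ge_iso X).2 h)

theorem hom_eq_zero {A B : C} (hA : t.ge A) (hB : t.le B) {n : ℤ} (hn : 0 < n)
    (f : A ⟶ B⟦n⟧) : f = 0 := by
  have e := (shiftFunctorAdd' C (n - 1) 1 n (by ring)).app B
  rw [← Preadditive.IsIso.comp_right_eq_zero f e.hom]
  exact t.hom_zero A _ hA (t.le_shift_of_nonneg (by omega) hB) _

theorem le_of_hom_eq_zero {X : C} (hX : ∀ A : C, t.ge A → ∀ f : A ⟶ X⟦(1 : ℤ)⟧, f = 0) :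
    t.le X := by
  obtain ⟨A, B, f, _, _, hT, hA, hB⟩ := t.exists_triangle (X⟦(1 : ℤ)⟧)
  obtain ⟨e⟩ := nonempty_iso_biprod_of_distTriang_of_mor₁_eq_zero
    (Triangle.shift_distinguished _ hT (-1)) (shift_triangle_mor₁_eq_zero (hX A hA f) (-1))
  have hX' : t.le (X⟦(1 : ℤ)⟧⟦(-1 : ℤ)⟧) := t.le_summand _ _ (t.le_iso e hB)
  exact (shift_zero_iff_of_iso_closed t.le_iso X).1
    ((shift_shift_iff_of_iso_closed t.le_iso X 1 (-1)).1 hX')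

theorem ge_of_hom_eq_zero {X : C} (hX : ∀ B : C, t.le B → ∀ f : X ⟶ B⟦(1 : ℤ)⟧, f = 0) :
    t.ge X := by
  obtain ⟨A, B, _, g, _, hT, hA, hB⟩ := t.exists_triangle X
  have hg : g = 0 := by
    have e := (shiftFunctorCompIsoId C (-1 : ℤ) 1 (by ring)).app B
    rw [← Preadditive.IsIso.comp_right_eq_zero g e.inv]
    exact hX _ hB _
  obtain ⟨e⟩ := nonempty_iso_biprod_of_distTriang_of_mor₂_eq_zero hT hg
  exact t.ge_summand _ _ (t.ge_iso (e ≪≫ biprod.braiding _ _) hA)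

theorem le_of_distTriang {T : Triangle C} (hT : T ∈ distTriang C) (h₁ : t.le T.obj₁)
    (h₃ : t.le T.obj₃) : t.le T.obj₂ := by
  refine t.le_of_hom_eq_zero fun A hA f => ?_
  have hT' := rot_of_distTriang _ (rot_of_distTriang _ hT)
  obtain ⟨g, rfl⟩ := Triangle.coyoneda_exact₃ _ hT' f (by
    change f ≫ (-(T.mor₂⟦(1 : ℤ)⟧')) = 0
    rw [Preadditive.comp_neg,
      t.hom_eq_zero hA h₃ one_pos (f ≫ T.mor₂⟦(1 : ℤ)⟧'), neg_zero])
  rw [t.hom_eq_zero hA h₁ one_pos g]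
  exact zero_comp

theorem ge_of_distTriang {T : Triangle C} (hT : T ∈ distTriang C) (h₁ : t.ge T.obj₁)
    (h₃ : t.ge T.obj₃) : t.ge T.obj₂ := by
  refine t.ge_of_hom_eq_zero fun B hB f => ?_
  obtain ⟨g, rfl⟩ := Triangle.yoneda_exact₂ _ hT f (t.hom_eq_zero h₁ hB one_pos _)
  rw [t.hom_eq_zero h₃ hB one_pos g, comp_zero]

theorem prop_of_le_of_ge_shift_neg {P : C → Prop}
    (htri : ∀ T : Triangle C, (T ∈ distTriang C) → P T.obj₁ → P T.obj₂ → P T.obj₃)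
    (hcoheart : ∀ X : C, t.ge X → t.le X → P X) (k : ℕ) {Y : C} (hY : t.le Y)
    (hk : t.ge (Y⟦-(k : ℤ)⟧)) : P Y := by
  induction k generalizing Y with
  | zero => exact hcoheart Y ((shift_zero_iff_of_iso_closed t.ge_iso Y).1 (by simpa using hk)) hY
  | succ k ih =>
    obtain ⟨A, B, _, _, _, hT, hA, hB⟩ := t.exists_triangle Y
    have hA' : t.le A := t.le_of_distTriang (inv_rot_of_distTriang _ hT) hB hY
    have hB' : t.ge (B⟦(-1 : ℤ)⟧⟦-(k : ℤ)⟧) := by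
      rw [shift_shift_iff_of_iso_closed t.ge_iso]
      refine t.ge_of_distTriang
        (Triangle.shift_distinguished _ (rot_of_distTriang _ hT) (-1 + -(k : ℤ))) ?_ ?_
      · simpa [add_comm] using hk
      · exact (shift_shift_iff_of_iso_closed t.ge_iso A 1 _).2
          (t.ge_shift_of_nonpos (n := 1 + (-1 + -(k : ℤ))) (by omega) hA)
    exact htri _ (inv_rot_of_distTriang _ hT) (ih hB hB') (hcoheart A hA hA')

theorem prop_of_ge_shift_of_le_shift {P : C → Prop} (hiso : ∀ {X Y : C}, (X ≅ Y) → P X → P Y)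
    (hshift : ∀ (X : C) (n : ℤ), P X → P (X⟦n⟧))
    (htri : ∀ T : Triangle C, (T ∈ distTriang C) → P T.obj₁ → P T.obj₂ → P T.obj₃)
    (hcoheart : ∀ X : C, t.ge X → t.le X → P X) {X : C} {a b : ℤ} (ha : t.ge (X⟦a⟧))
    (hb : t.le (X⟦b⟧)) : P X := by
  have hXb : P (X⟦b⟧) := t.prop_of_le_of_ge_shift_neg htri hcoheart (b - a).toNat hb
    ((shift_shift_iff_of_iso_closed t.ge_iso X b _).2 (t.ge_shift_of_ge_shift (by omega) ha))
  have hX := (shift_shift_iff_of_iso_closed hiso X b (-b)).1 (hshift _ (-b) hXb)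
  rw [add_neg_cancel] at hX
  exact (shift_zero_iff_of_iso_closed hiso X).1 hX

end CoTStructure

/-- The coheart of a bounded co-`t`-structure is a silting subcategory: it is closed under
direct summands, has no positively-shifted Homs between its objects, and generates `D` as
a triangulated category closed under direct summands (i.e. the smallest thick subcategory
containing the coheart is all of `D`). -/
theorem coheart_is_silting_subcategory
    {C : Type*} [Category C] [Preadditive C] [HasZeroObject C] [HasShift C ℤ]
    [∀ n : ℤ, (shiftFunctor C n).Additive] [Pretriangulated C]
    (t : CoTStructure C)
    (hbdd₁ : ∀ X : C, ∃ n : ℤ, t.ge (X⟦n⟧))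
    (hbdd₂ : ∀ X : C, ∃ n : ℤ, t.le (X⟦n⟧)) :
    (∀ X Y : C, t.ge (X ⊞ Y) → t.le (X ⊞ Y) → t.ge X ∧ t.le X) ∧
    (∀ X Y : C, t.ge X → t.le X → t.ge Y → t.le Y →
      ∀ k : ℤ, 0 < k → ∀ f : X ⟶ Y⟦k⟧, f = 0) ∧
    (∀ P : C → Prop,
      (∀ {X Y : C}, (X ≅ Y) → P X → P Y) →
      (∀ X : C, IsZero X → P X) →
      (∀ (X : C) (n : ℤ), P X → P (X⟦n⟧)) →
      (∀ T : Triangle C, (T ∈ distTriang C) → P T.obj₁ → P T.obj₂ → P T.obj₃) →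
      (∀ X Y : C, P (X ⊞ Y) → P X) →
      (∀ X : C, t.ge X → t.le X → P X) →
      ∀ X : C, P X) := by
  refine ⟨fun X Y hge hle => ⟨t.ge_summand X Y hge, t.le_summand X Y hle⟩,
    fun X Y hX _ _ hY k hk f => t.hom_eq_zero hX hY hk f, ?_⟩
  intro P hiso _ hshift htri _ hcoheart X
  obtain ⟨a, ha⟩ := hbdd₁ X
  obtain ⟨b, hb⟩ := hbdd₂ X
  exact t.prop_of_ge_shift_of_le_shift hiso hshift htri hcoheart ha hb
end

section
/- Let D be a triangulated category with objects {\nabla_s}_{s \in S} indexed by a poset S, satisfying: Hom(\nabla_s, \nabla_t[i]) = 0 for all i whenever s is not \ge t, and End(\nabla_s) \cong k with Hom(\nabla_s, \nabla_s[i]) = 0 for i \ne 0. Suppose each s admits an object \Delta_s and a morphism \iota_s: \Delta_s \to \nabla_s whose cone lies in the triangulated subcategory generated by {\nabla_u : u < s}, with Hom(\Delta_s, \nabla_t[i]) = 0 for all i whenever s > t. Then the pair (\Delta_s, \iota_s) is unique up to unique isomorphism: if (\Delta'_s, \iota'_s) also satisfies these conditions, there is a unique isomorphism f: \Delta_s \to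 \Delta'_s with \iota'_s \circ f = \iota_s. -/
/-!
The objects `Y` with `Hom(X, Y⟦i⟧) = 0` for all `i` form a triangulated subcategory, the right
orthogonal of the shifts of `X`; for `X = Δ` or `Δ'` it contains every `∇ u` with `u < s`, hence
the cones `K` of `ι` and `K'` of `ι'`. The Hom-sequence of `Δ' ⟶ ∇ s ⟶ K'` then shows that
composition with `ι'` is bijective on maps out of `Δ` and out of `Δ'`, and likewise for `ι`;
existence, uniqueness and invertibility of `f` follow as in the Yoneda lemma.
-/

open CategoryTheory Limits Pretriangulated

variable {C : Type*} [Category C] [Preadditive C] [HasZeroObject C] [HasShift C ℤ]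
  [∀ n : ℤ, (shiftFunctor C n).Additive] [Pretriangulated C]

/-- `TriaGen B X` says `X` lies in the smallest triangulated subcategory of `C` containing
the objects satisfying `B` (closed under isomorphisms, zero objects, shifts and cones). -/
def TriaGen (B : C → Prop) (X : C) : Prop :=
  ∀ P : C → Prop,
    (∀ {Y Z : C}, (Y ≅ Z) → P Y → P Z) →
    (∀ Y : C, IsZero Y → P Y) →
    (∀ (Y : C) (n : ℤ), P Y → P (Y⟦n⟧)) →
    (∀ T : Triangle C, (T ∈ distTriang C) → P T.obj₁ → P T.obj₂ → P T.obj₃) →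
    (∀ Y : C, B Y → P Y) → P X

open ObjectProperty

lemma TriaGen.prop_of_isTriangulated {B : C → Prop} {P : ObjectProperty C} [P.IsTriangulated]
    [P.IsClosedUnderIsomorphisms] (hB : ∀ Y, B Y → P Y) {X : C} (hX : TriaGen B X) : P X :=
  hX P (fun e hY ↦ P.prop_of_iso e hY) (fun _ hY ↦ P.prop_of_isZero hY)
    (fun Y n hY ↦ P.le_shift n Y hY) (fun T hT h₁ h₂ ↦ P.ext_of_isTriangulatedClosed₃ T hT h₁ h₂)
    hB

lemma rightOrthogonal_shiftClosure_singleton_of_hom_shift_eq_zero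
    {C : Type*} [Category C] [Preadditive C] [HasShift C ℤ]
    [∀ n : ℤ, (shiftFunctor C n).Additive] {X Y : C} (h : ∀ (i : ℤ) (f : X ⟶ Y⟦i⟧), f = 0) :
    ((singleton X).shiftClosure ℤ).rightOrthogonal Y := by
  rintro Z f ⟨_, a, e, ⟨⟩⟩
  have hshift : (e.inv ≫ f)⟦-a⟧' = 0 := by
    rw [← cancel_epi ((shiftFunctorCompIsoId C a (-a) (add_neg_cancel a)).inv.app X), comp_zero]
    exact h _ _
  rw [← cancel_epi e.inv, comp_zero]
  exact (shiftFunctor C (-a)).map_injective (by rw [hshift, Functor.map_zero])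

lemma TriaGen.rightOrthogonal_shiftClosure_singleton {B : C → Prop} {X K : C}
    (hK : TriaGen B K) (hB : ∀ Y, B Y → ∀ (i : ℤ) (f : X ⟶ Y⟦i⟧), f = 0) :
    ((singleton X).shiftClosure ℤ).rightOrthogonal K :=
  hK.prop_of_isTriangulated fun Y hY ↦ rightOrthogonal_shiftClosure_singleton_of_hom_shift_eq_zero
    (hB Y hY)

/-- The exact sequence `Hom(X, K⟦-1⟧) ⟶ Hom(X, P) ⟶ Hom(X, N) ⟶ Hom(X, K)` has vanishing outer
terms. -/
lemma comp_bijective_of_distTriang {X P N K : C} {ι : P ⟶ N}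
    {g : N ⟶ K} {h : K ⟶ P⟦(1 : ℤ)⟧} (hT : Triangle.mk ι g h ∈ distTriang C)
    (hK : ((singleton X).shiftClosure ℤ).rightOrthogonal K) :
    Function.Bijective (fun φ : X ⟶ P ↦ φ ≫ ι) := by
  have hX : (singleton X).shiftClosure ℤ X := le_shiftClosure _ _ (ofObj_apply _ ())
  refine ⟨fun φ φ' hφ ↦ ?_, fun ψ ↦ ?_⟩
  · have hφ' : (φ - φ') ≫ ι = 0 := by rw [Preadditive.sub_comp, sub_eq_zero]; exact hφ
    obtain ⟨e, he⟩ := Triangle.coyoneda_exact₂ _ (inv_rot_of_distTriang _ hT) (φ - φ') hφ'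
    rw [← sub_eq_zero, he, (le_shift _ (-1) K hK) e hX]
    exact zero_comp
  · obtain ⟨φ, hφ⟩ := Triangle.coyoneda_exact₂ _ hT ψ (hK _ hX)
    exact ⟨φ, hφ.symm⟩

lemma existsUnique_comp_eq_and_isIso {C : Type*} [Category C] {X Y N : C} (ι : X ⟶ N)
    (ι' : Y ⟶ N) (hXY : Function.Bijective (fun f : X ⟶ Y ↦ f ≫ ι'))
    (hYX : Function.Surjective (fun f : Y ⟶ X ↦ f ≫ ι))
    (hXX : Function.Injective (fun f : X ⟶ X ↦ f ≫ ι))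
    (hYY : Function.Injective (fun f : Y ⟶ Y ↦ f ≫ ι')) :
    (∃! f : X ⟶ Y, f ≫ ι' = ι) ∧ ∀ f : X ⟶ Y, f ≫ ι' = ι → IsIso f := by
  obtain ⟨f, hf⟩ := hXY.surjective ι
  obtain ⟨e, he⟩ := hYX ι'
  dsimp only at hf he
  have hiso : IsIso f :=
    ⟨e, hXX (by simp only [Category.assoc, he, hf, Category.id_comp]),
      hYY (by simp only [Category.assoc, he, hf, Category.id_comp])⟩
  have huniq : ∀ f' : X ⟶ Y, f' ≫ ι' = ι → f' = f := fun f' hf' ↦ hXY.injective (hf'.trans hf.symm)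
  exact ⟨⟨f, hf, huniq⟩, fun f' hf' ↦ huniq f' hf' ▸ hiso⟩

theorem dual_object_unique_general
    {σ : Type*} [PartialOrder σ] (nabla : σ → C)
    (s : σ) (Δ Δ' : C) (ι : Δ ⟶ nabla s) (ι' : Δ' ⟶ nabla s)
    (hcone : ∃ (K : C) (g : nabla s ⟶ K) (h : K ⟶ Δ⟦(1 : ℤ)⟧),
      (Triangle.mk ι g h ∈ distTriang C) ∧
        TriaGen (fun Y => ∃ u : σ, u < s ∧ Y = nabla u) K)
    (hcone' : ∃ (K : C) (g : nabla s ⟶ K) (h : K ⟶ Δ'⟦(1 : ℤ)⟧),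
      (Triangle.mk ι' g h ∈ distTriang C) ∧
        TriaGen (fun Y => ∃ u : σ, u < s ∧ Y = nabla u) K)
    (horth : ∀ t : σ, t < s → ∀ (i : ℤ) (f : Δ ⟶ (nabla t)⟦i⟧), f = 0)
    (horth' : ∀ t : σ, t < s → ∀ (i : ℤ) (f : Δ' ⟶ (nabla t)⟦i⟧), f = 0) :
    (∃! f : Δ ⟶ Δ', f ≫ ι' = ι) ∧ (∀ f : Δ ⟶ Δ', f ≫ ι' = ι → IsIso f) := by
  obtain ⟨K, g, h, hT, hK⟩ := hcone
  obtain ⟨K', g', h', hT', hK'⟩ := hcone'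
  have hB {X : C} (hX : ∀ t : σ, t < s → ∀ (i : ℤ) (f : X ⟶ (nabla t)⟦i⟧), f = 0) :
      ∀ Y, (∃ u : σ, u < s ∧ Y = nabla u) → ∀ (i : ℤ) (f : X ⟶ Y⟦i⟧), f = 0 := by
    rintro _ ⟨u, hu, rfl⟩
    exact hX u hu
  exact existsUnique_comp_eq_and_isIso ι ι'
    (comp_bijective_of_distTriang hT' (hK'.rightOrthogonal_shiftClosure_singleton (hB horth)))
    (comp_bijective_of_distTriang hT
      (hK.rightOrthogonal_shiftClosure_singleton (hB horth'))).surjective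
    (comp_bijective_of_distTriang hT
      (hK.rightOrthogonal_shiftClosure_singleton (hB horth))).injective
    (comp_bijective_of_distTriang hT'
      (hK'.rightOrthogonal_shiftClosure_singleton (hB horth'))).injective

/-- Uniqueness of the dual object: given a pre-exceptional family `∇` over a poset and an
index `s`, any two pairs `(Δ, ι : Δ ⟶ ∇ s)` and `(Δ', ι' : Δ' ⟶ ∇ s)` whose cones lie in
the subcategory generated by `{∇ u : u < s}`, and which are orthogonal to `∇ t [i]` for
`t < s`, are related by a unique morphism `f : Δ ⟶ Δ'` with `f ≫ ι' = ι`, and any such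
`f` is an isomorphism. -/
theorem dual_object_unique
    {𝕜 : Type*} [Field 𝕜] [Linear 𝕜 C]
    {σ : Type*} [PartialOrder σ] (nabla : σ → C)
    (h₁ : ∀ s t : σ, ¬ t ≤ s → ∀ (i : ℤ) (f : nabla s ⟶ (nabla t)⟦i⟧), f = 0)
    (h₂ : ∀ (s : σ) (f : nabla s ⟶ nabla s), ∃ c : 𝕜, f = c • 𝟙 (nabla s))
    (h₃ : ∀ (s : σ) (i : ℤ), i ≠ 0 → ∀ f : nabla s ⟶ (nabla s)⟦i⟧, f = 0)
    (s : σ) (Δ Δ' : C) (ι : Δ ⟶ nabla s) (ι' : Δ' ⟶ nabla s)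
    (hcone : ∃ (K : C) (g : nabla s ⟶ K) (h : K ⟶ Δ⟦(1 : ℤ)⟧),
      (Triangle.mk ι g h ∈ distTriang C) ∧
        TriaGen (fun Y => ∃ u : σ, u < s ∧ Y = nabla u) K)
    (hcone' : ∃ (K : C) (g : nabla s ⟶ K) (h : K ⟶ Δ'⟦(1 : ℤ)⟧),
      (Triangle.mk ι' g h ∈ distTriang C) ∧
        TriaGen (fun Y => ∃ u : σ, u < s ∧ Y = nabla u) K)
    (horth : ∀ t : σ, t < s → ∀ (i : ℤ) (f : Δ ⟶ (nabla t)⟦i⟧), f = 0)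
    (horth' : ∀ t : σ, t < s → ∀ (i : ℤ) (f : Δ' ⟶ (nabla t)⟦i⟧), f = 0) :
    (∃! f : Δ ⟶ Δ', f ≫ ι' = ι) ∧ (∀ f : Δ ⟶ Δ', f ≫ ι' = ι → IsIso f) :=
  dual_object_unique_general nabla s Δ Δ' ι ι' hcone hcone' horth horth'
end

section
/- Let D be a triangulated category with a dualizable pre-exceptional collection (\nabla_s, \Delta_s, \iota_s)_{s \in S} as above. Then for each s there are natural isomorphisms Hom(\Delta_s, \Delta_s[i]) \cong Hom(\Delta_s, \nabla_s[i]) \cong Hom(\nabla_s, \nabla_s[i]) for all i \in \mathbb{Z}, induced by composition with \iota_s. -/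
/-!
Let `K` be the cone of `ι_s`, so that `Δ_s → ∇_s → K → Δ_s⟦1⟧` is distinguished and `K` lies in the
triangulated hull of the `∇_u` with `u < s`. The objects `Y` with `Hom(Δ_s, Y⟦j⟧) = 0` for all `j`,
and likewise those with `Hom(Y, ∇_s⟦j⟧) = 0` for all `j`, form a triangulated subcategory
containing every such `∇_u`; hence `Hom(Δ_s, K⟦j⟧) = 0 = Hom(K, ∇_s⟦j⟧)` for all `j`.
The long exact `Hom` sequences of the triangle then make composition with `ι_s` bijective.
-/

open CategoryTheory Limits Pretriangulated

variable {C : Type*} [Category C] [Preadditive C] [HasZeroObject C] [HasShift C ℤ]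
  [∀ n : ℤ, (shiftFunctor C n).Additive] [Pretriangulated C]

section

variable {C : Type*} [Category C] [Preadditive C] [HasShift C ℤ]

lemma hom_to_shift_shift_eq_zero {A X : C} (h : ∀ (i : ℤ) (f : A ⟶ X⟦i⟧), f = 0)
    (a b : ℤ) (f : A ⟶ X⟦a⟧⟦b⟧) : f = 0 :=
  (Preadditive.IsIso.comp_right_eq_zero _ ((shiftFunctorAdd C a b).inv.app X)).1 (h _ _)

lemma hom_from_shift_eq_zero {X Y : C} (h : ∀ (i : ℤ) (f : X ⟶ Y⟦i⟧), f = 0)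
    (n i : ℤ) (f : X⟦n⟧ ⟶ Y⟦i⟧) : f = 0 := by
  apply (shiftFunctor C (-n)).map_injective
  rw [Functor.map_zero, ← Preadditive.IsIso.comp_left_eq_zero (shiftShiftNeg X n).inv]
  exact hom_to_shift_shift_eq_zero h i (-n) _

end

namespace CategoryTheory.Pretriangulated

variable (T : Triangle C) (hT : T ∈ distTriang C)
include hT

lemma bijective_comp_mor₁_of_distTriang {X : C} (h₃ : ∀ f : X ⟶ T.obj₃, f = 0)
    (h₃' : ∀ f : X ⟶ T.obj₃⟦(-1 : ℤ)⟧, f = 0) :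
    Function.Bijective (fun f : X ⟶ T.obj₁ => f ≫ T.mor₁) := by
  refine ⟨(injective_iff_map_eq_zero (Preadditive.rightComp X T.mor₁)).2 fun f hf => ?_,
    fun φ => ?_⟩
  · obtain ⟨w, rfl⟩ := Triangle.coyoneda_exact₂ _ (inv_rot_of_distTriang _ hT) f hf
    exact (congrArg (· ≫ _) (h₃' w)).trans zero_comp
  · obtain ⟨f, rfl⟩ := Triangle.coyoneda_exact₂ _ hT φ (h₃ _)
    exact ⟨f, rfl⟩

lemma bijective_mor₁_comp_of_distTriang {Y : C} (h₃ : ∀ f : T.obj₃ ⟶ Y, f = 0)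
    (h₃' : ∀ f : T.obj₃⟦(-1 : ℤ)⟧ ⟶ Y, f = 0) :
    Function.Bijective (fun f : T.obj₂ ⟶ Y => T.mor₁ ≫ f) := by
  refine ⟨(injective_iff_map_eq_zero (Preadditive.leftComp Y T.mor₁)).2 fun f hf => ?_,
    fun φ => ?_⟩
  · obtain ⟨w, rfl⟩ := Triangle.yoneda_exact₂ _ hT f hf
    exact (congrArg (_ ≫ ·) (h₃ w)).trans comp_zero
  · obtain ⟨f, rfl⟩ := Triangle.yoneda_exact₂ _ (inv_rot_of_distTriang _ hT) φ (h₃' _)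
    exact ⟨f, rfl⟩

lemma bijective_comp_shift_map_mor₁_of_distTriang {X : C}
    (hX : ∀ (j : ℤ) (f : X ⟶ T.obj₃⟦j⟧), f = 0) (i : ℤ) :
    Function.Bijective (fun f : X ⟶ T.obj₁⟦i⟧ => f ≫ T.mor₁⟦i⟧') := by
  have hshift := bijective_comp_mor₁_of_distTriang _ (Triangle.shift_distinguished T hT i)
    (hX i) (hom_to_shift_shift_eq_zero hX i (-1))
  -- the shifted triangle has first morphism `i.negOnePow • T.mor₁⟦i⟧'`
  have hsign : (fun f : X ⟶ T.obj₁⟦i⟧ => f ≫ T.mor₁⟦i⟧') =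
      (fun f => f ≫ (i.negOnePow • T.mor₁⟦i⟧')) ∘ (fun f : X ⟶ T.obj₁⟦i⟧ => i.negOnePow • f) := by
    funext f
    simp [Linear.comp_units_smul, Linear.units_smul_comp, smul_smul]
  rw [hsign]
  exact hshift.comp (MulAction.bijective _)

end CategoryTheory.Pretriangulated

namespace TriaGen

variable {B : C → Prop} {X : C}

lemma hom_to_shift_eq_zero (hX : TriaGen B X) {A : C}
    (hB : ∀ Y : C, B Y → ∀ (i : ℤ) (f : A ⟶ Y⟦i⟧), f = 0) :
    ∀ (i : ℤ) (f : A ⟶ X⟦i⟧), f = 0 := by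
  refine hX (fun Z => ∀ (i : ℤ) (f : A ⟶ Z⟦i⟧), f = 0) ?_ ?_ ?_ ?_ hB
  · intro Y Z e hY i f
    exact (Preadditive.IsIso.comp_right_eq_zero _ ((shiftFunctor C i).mapIso e.symm).hom).1
      (hY _ _)
  · intro Y hY i f
    exact ((shiftFunctor C i).map_isZero hY).eq_of_tgt f 0
  · intro Y n hY i f
    exact hom_to_shift_shift_eq_zero hY n i f
  · intro T hT h₁ h₂ i f
    have hf : f ≫ ((Triangle.shiftFunctor C i).obj T).mor₃ = 0 :=
      hom_to_shift_shift_eq_zero h₁ i 1 _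
    obtain ⟨g, rfl⟩ := Triangle.coyoneda_exact₃ _ (T.shift_distinguished hT i) f hf
    exact (congrArg (· ≫ _) (h₂ i g)).trans zero_comp

lemma hom_from_eq_zero (hX : TriaGen B X) {N : C}
    (hB : ∀ Y : C, B Y → ∀ (i : ℤ) (f : Y ⟶ N⟦i⟧), f = 0) :
    ∀ (i : ℤ) (f : X ⟶ N⟦i⟧), f = 0 := by
  refine hX (fun Z => ∀ (i : ℤ) (f : Z ⟶ N⟦i⟧), f = 0) ?_ ?_ ?_ ?_ hB
  · intro Y Z e hY i f
    exact (Preadditive.IsIso.comp_left_eq_zero e.hom _).1 (hY _ _)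
  · intro Y hY i f
    exact hY.eq_of_src f 0
  · intro Y n hY i f
    exact hom_from_shift_eq_zero hY n i f
  · intro T hT h₁ h₂ i f
    obtain ⟨g, rfl⟩ := Triangle.yoneda_exact₃ _ hT f (h₂ i _)
    exact (congrArg (_ ≫ ·) (hom_from_shift_eq_zero h₁ 1 i g)).trans comp_zero

end TriaGen

theorem delta_nabla_end_iso_general
    {σ : Type*} [PartialOrder σ] (nabla Delta : σ → C) (ι : ∀ s : σ, Delta s ⟶ nabla s)
    (h₁ : ∀ s t : σ, ¬ t ≤ s → ∀ (i : ℤ) (f : nabla s ⟶ (nabla t)⟦i⟧), f = 0)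
    (hcone : ∀ s : σ, ∃ (K : C) (g : nabla s ⟶ K) (h : K ⟶ (Delta s)⟦(1 : ℤ)⟧),
      (Triangle.mk (ι s) g h ∈ distTriang C) ∧
        TriaGen (fun Y => ∃ u : σ, u < s ∧ Y = nabla u) K)
    (horth : ∀ s t : σ, t < s → ∀ (i : ℤ) (f : Delta s ⟶ (nabla t)⟦i⟧), f = 0)
    : ∀ (s : σ) (i : ℤ),
      Function.Bijective
        (fun f : Delta s ⟶ (Delta s)⟦i⟧ => f ≫ (shiftFunctor C i).map (ι s)) ∧
      Function.Bijective
        (fun f : nabla s ⟶ (nabla s)⟦i⟧ => ι s ≫ f) := by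
  intro s i
  obtain ⟨K, g, h, hT, hK⟩ := hcone s
  have hDeltaK : ∀ (j : ℤ) (f : Delta s ⟶ K⟦j⟧), f = 0 :=
    hK.hom_to_shift_eq_zero (by rintro _ ⟨u, hu, rfl⟩; exact horth s u hu)
  have hKnabla : ∀ (j : ℤ) (f : K ⟶ (nabla s)⟦j⟧), f = 0 :=
    hK.hom_from_eq_zero (by rintro _ ⟨u, hu, rfl⟩; exact h₁ u s hu.not_ge)
  exact ⟨bijective_comp_shift_map_mor₁_of_distTriang _ hT hDeltaK i,
    bijective_mor₁_comp_of_distTriang _ hT (hKnabla i) (hom_from_shift_eq_zero hKnabla (-1) i)⟩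

/-- For a dualizable pre-exceptional collection `(∇_s, Δ_s, ι_s)`, composition with `ι_s`
induces isomorphisms `Hom(Δ_s, Δ_s[i]) ≅ Hom(Δ_s, ∇_s[i]) ≅ Hom(∇_s, ∇_s[i])` for all
`i ∈ ℤ`. -/
theorem delta_nabla_end_iso
    {σ : Type*} [PartialOrder σ] (nabla Delta : σ → C) (ι : ∀ s : σ, Delta s ⟶ nabla s)
    (hfin : ∀ s : σ, {t : σ | t ≤ s}.Finite)
    (h₁ : ∀ s t : σ, ¬ t ≤ s → ∀ (i : ℤ) (f : nabla s ⟶ (nabla t)⟦i⟧), f = 0)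
    (hcone : ∀ s : σ, ∃ (K : C) (g : nabla s ⟶ K) (h : K ⟶ (Delta s)⟦(1 : ℤ)⟧),
      (Triangle.mk (ι s) g h ∈ distTriang C) ∧
        TriaGen (fun Y => ∃ u : σ, u < s ∧ Y = nabla u) K)
    (horth : ∀ s t : σ, t < s → ∀ (i : ℤ) (f : Delta s ⟶ (nabla t)⟦i⟧), f = 0)
    : ∀ (s : σ) (i : ℤ),
      Function.Bijective
        (fun f : Delta s ⟶ (Delta s)⟦i⟧ => f ≫ (shiftFunctor C i).map (ι s)) ∧
      Function.Bijective
        (fun f : nabla s ⟶ (nabla s)⟦i⟧ => ι s ≫ f) :=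
  delta_nabla_end_iso_general nabla Delta ι h₁ hcone horth
end

section
/- Let D be a triangulated category and (\nabla_s, \Delta_s, \iota_s)_{s \in S} a dualizable pre-exceptional collection over a finite poset S. Then for any lower set U \subset S, the triangulated subcategory generated by {\nabla_u : u \in U} coincides with the triangulated subcategory generated by {\Delta_u : u \in U}. -/
open CategoryTheory Limits Pretriangulated

variable {C : Type*} [Category C] [Preadditive C] [HasZeroObject C] [HasShift C ℤ]
  [∀ n : ℤ, (shiftFunctor C n).Additive] [Pretriangulated C]

lemma triaGen_base {B : C → Prop} {X : C} (h : B X) : TriaGen B X :=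
  fun _ _ _ _ _ hb => hb _ h

lemma triaGen_iso {B : C → Prop} {Y Z : C} (e : Y ≅ Z) (h : TriaGen B Y) : TriaGen B Z :=
  fun P hi hz hs ht hb => hi e (h P hi hz hs ht hb)

lemma triaGen_shift {B : C → Prop} {Y : C} (n : ℤ) (h : TriaGen B Y) : TriaGen B (Y⟦n⟧) :=
  fun P hi hz hs ht hb => hs _ n (h P hi hz hs ht hb)

lemma triaGen_tri {B : C → Prop} (T : Triangle C) (hT : T ∈ distTriang C)
    (h1 : TriaGen B T.obj₁) (h2 : TriaGen B T.obj₂) : TriaGen B T.obj₃ :=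
  fun P hi hz hs ht hb => ht T hT (h1 P hi hz hs ht hb) (h2 P hi hz hs ht hb)

lemma triaGen_mono {B B' : C → Prop} (h : ∀ Y, B Y → TriaGen B' Y) {X : C}
    (hX : TriaGen B X) : TriaGen B' X :=
  hX (TriaGen B') (fun e => triaGen_iso e) (fun _ hz => fun _ _ hz' _ _ _ => hz' _ hz)
    (fun _ n => triaGen_shift n) (fun T hT => triaGen_tri T hT) h

/-- For a dualizable pre-exceptional collection over a finite poset, and any lower set
`U`, the triangulated subcategory generated by `{∇_u : u ∈ U}` coincides with the one
generated by `{Δ_u : u ∈ U}`. -/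
theorem gen_nabla_eq_gen_delta
    {σ : Type*} [PartialOrder σ] (nabla Delta : σ → C) (ι : ∀ s : σ, Delta s ⟶ nabla s)
    (hfin : ∀ s : σ, {t : σ | t ≤ s}.Finite)
    (h₁ : ∀ s t : σ, ¬ t ≤ s → ∀ (i : ℤ) (f : nabla s ⟶ (nabla t)⟦i⟧), f = 0)
    (hcone : ∀ s : σ, ∃ (K : C) (g : nabla s ⟶ K) (h : K ⟶ (Delta s)⟦(1 : ℤ)⟧),
      (Triangle.mk (ι s) g h ∈ distTriang C) ∧
        TriaGen (fun Y => ∃ u : σ, u < s ∧ Y = nabla u) K)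
    (horth : ∀ s t : σ, t < s → ∀ (i : ℤ) (f : Delta s ⟶ (nabla t)⟦i⟧), f = 0)
    [Finite σ]
    (U : Set σ) (hU : ∀ t ∈ U, ∀ u : σ, u ≤ t → u ∈ U) :
    ∀ X : C, TriaGen (fun Y => ∃ u ∈ U, Y = nabla u) X ↔
      TriaGen (fun Y => ∃ u ∈ U, Y = Delta u) X := by
  -- Claim 1: for s ∈ U, ∇_s is generated by the Δ's (by well-founded induction on s)
  have claim1 : ∀ s ∈ U, TriaGen (fun Y => ∃ u ∈ U, Y = Delta u) (nabla s) := by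
    intro s
    induction s using WellFoundedLT.induction with
    | _ s IH =>
      intro hs
      obtain ⟨K, g, h, hdist, hK⟩ := hcone s
      have hK' : TriaGen (fun Y => ∃ u ∈ U, Y = Delta u) K := by
        refine triaGen_mono (fun Y hY => ?_) hK
        obtain ⟨u, hu, rfl⟩ := hY
        exact IH u hu (hU s hs u hu.le)
      have hΔ : TriaGen (fun Y => ∃ u ∈ U, Y = Delta u) (Delta s) :=
        triaGen_base ⟨s, hs, rfl⟩
      exact triaGen_tri _ (inv_rot_of_distTriang _ hdist) (triaGen_shift _ hK') hΔ
  -- Claim 2: for s ∈ U, Δ_s is generated by the ∇'s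
  have claim2 : ∀ s ∈ U, TriaGen (fun Y => ∃ u ∈ U, Y = nabla u) (Delta s) := by
    intro s hs
    obtain ⟨K, g, h, hdist, hK⟩ := hcone s
    have hK' : TriaGen (fun Y => ∃ u ∈ U, Y = nabla u) K := by
      refine triaGen_mono (fun Y hY => ?_) hK
      obtain ⟨u, hu, rfl⟩ := hY
      exact triaGen_base ⟨u, hU s hs u hu.le, rfl⟩
    have hNab : TriaGen (fun Y => ∃ u ∈ U, Y = nabla u) (nabla s) :=
      triaGen_base ⟨s, hs, rfl⟩
    have hshift : TriaGen (fun Y => ∃ u ∈ U, Y = nabla u) ((Delta s)⟦(1 : ℤ)⟧) :=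
      triaGen_tri _ (rot_of_distTriang _ hdist) hNab hK'
    exact triaGen_iso ((shiftEquiv C (1 : ℤ)).unitIso.symm.app (Delta s))
      (triaGen_shift _ hshift)
  intro X
  constructor
  · exact fun hX => triaGen_mono (fun Y hY => by
      obtain ⟨u, hu, rfl⟩ := hY; exact claim1 u hu) hX
  · exact fun hX => triaGen_mono (fun Y hY => by
      obtain ⟨u, hu, rfl⟩ := hY; exact claim2 u hu) hX
end
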